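/- The Orchard crossing number of the complete graph K_4 is 2 and the maximal Orchard crossing number of K_4 is 3, i.e., OCN(K_4) = 2 and MOCN(K_4) = 3. -/

import Mathlib

set_option linter.unusedSectionVars false

/-!
Common definitions for the Orchard crossing number
(Feder–Garber, "The Orchard crossing number of an abstract graph").
-/

noncomputable section

/-- Points of the plane. -/
abbrev Pt : Type := ℝ × ℝ

/-- The line through two points of the plane. -/
def lineThrough (p q : Pt) : Set Pt := (affineSpan ℝ ({p, q} : Set Pt) : Set Pt)

/-- A line (or any set) `L` separates the points `P` and `Q` if both lie off `L`
and they lie in different connected components of the complement of `L`. -/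
def Separates (L : Set Pt) (P Q : Pt) : Prop :=
  P ∉ L ∧ Q ∉ L ∧ connectedComponentIn Lᶜ P ≠ connectedComponentIn Lᶜ Q

theorem Separates.symm {L : Set Pt} {P Q : Pt} (h : Separates L P Q) : Separates L Q P :=
  ⟨h.2.1, h.1, h.2.2.symm⟩

/-- A generic configuration: a finite set of points, no three of which are collinear. -/
def GenericConfig (S : Set Pt) : Prop :=
  S.Finite ∧ ∀ p ∈ S, ∀ q ∈ S, ∀ r ∈ S, p ≠ q → p ≠ r → q ≠ r →
    ¬ Collinear ℝ ({p, q, r} : Set Pt)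

/-- A finite set of points is in convex position if every point of it is an extreme
point of its convex hull, i.e. lies outside the convex hull of the other points. -/
def ConvexPosition (S : Set Pt) : Prop :=
  ∀ p ∈ S, p ∉ convexHull ℝ (S \ {p})

variable {V : Type*} [Fintype V] [DecidableEq V]

/-- A rectilinear drawing of a graph on vertex set `V`: an injective placement of the
vertices in the plane whose image is a generic configuration. -/
def IsRectDrawing (f : V → Pt) : Prop :=
  Function.Injective f ∧ GenericConfig (Set.range f)

/-- `sepCount f s t` is `n(s,t)`: the number of (unordered) pairs of vertices, both
different from `s` and `t`, whose drawn points span a line separating `f s` from `f t`. -/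
def sepCount (f : V → Pt) (s t : V) : ℕ :=
  Set.ncard {e : Finset V | ∃ a b : V, e = {a, b} ∧ a ≠ b ∧ s ∉ e ∧ t ∉ e ∧
    Separates (lineThrough (f a) (f b)) (f s) (f t)}

theorem sepCount_symm (f : V → Pt) (s t : V) : sepCount f s t = sepCount f t s := by
  unfold sepCount
  congr 1
  ext e
  constructor
  · rintro ⟨a, b, rfl, hab, hs, ht, hsep⟩
    exact ⟨a, b, rfl, hab, ht, hs, hsep.symm⟩
  · rintro ⟨a, b, rfl, hab, ht, hs, hsep⟩
    exact ⟨a, b, rfl, hab, hs, ht, hsep.symm⟩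

/-- The crossing number `n(R(G))` of a drawing: the sum of `n(s,t)` over all edges. -/
def drawingCrossings (G : SimpleGraph V) (f : V → Pt) : ℕ :=
  ∑ e ∈ G.edgeSet.toFinite.toFinset,
    Sym2.lift ⟨fun s t => sepCount f s t, fun s t => sepCount_symm f s t⟩ e

/-- The Orchard crossing number: the minimum of `n(R(G))` over all rectilinear drawings. -/
def OCN (G : SimpleGraph V) : ℕ :=
  sInf {n | ∃ f : V → Pt, IsRectDrawing f ∧ drawingCrossings G f = n}

/-- The maximal Orchard crossing number: the maximum of `n(R(G))` over all drawings. -/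
def MOCN (G : SimpleGraph V) : ℕ :=
  sSup {n | ∃ f : V → Pt, IsRectDrawing f ∧ drawingCrossings G f = n}

/-- The open segment drawn for an edge. -/
def edgeSeg (f : V → Pt) (e : Sym2 V) : Set Pt :=
  Sym2.lift ⟨fun a b => openSegment ℝ (f a) (f b), fun a b => openSegment_symm ℝ (f a) (f b)⟩ e

/-- The number of unordered pairs of distinct edges of `G` whose drawn open segments
intersect. -/
def crossPairs (G : SimpleGraph V) (f : V → Pt) : ℕ :=
  Set.ncard {p : Finset (Sym2 V) | ∃ e₁ e₂ : Sym2 V, p = {e₁, e₂} ∧ e₁ ≠ e₂ ∧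
    e₁ ∈ G.edgeSet ∧ e₂ ∈ G.edgeSet ∧ (edgeSeg f e₁ ∩ edgeSeg f e₂).Nonempty}

/-- The rectilinear crossing number: the minimum number of crossing pairs of edges
over all rectilinear drawings. -/
def rcr (G : SimpleGraph V) : ℕ :=
  sInf {n | ∃ f : V → Pt, IsRectDrawing f ∧ crossPairs G f = n}

/-- The number of 4-element subsets of the drawn points which are in convex position. -/
def convexFour (f : V → Pt) : ℕ :=
  Set.ncard {Q : Finset Pt | Q.card = 4 ∧ (Q : Set Pt) ⊆ Set.range f ∧
    ConvexPosition (Q : Set Pt)}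

/-- The cyclic successor on `Fin n`. -/
def nextFin {n : ℕ} (i : Fin n) : Fin n :=
  ⟨(i.val + 1) % n, Nat.mod_lt _ (Nat.zero_lt_of_lt i.isLt)⟩

/-- The star graph `K_{n,1}` on `n+1` vertices: the center `0` is joined to each of
the `n` outer vertices. -/
def starGraph (n : ℕ) : SimpleGraph (Fin (n + 1)) :=
  SimpleGraph.fromEdgeSet {e | ∃ i : Fin n, e = s((0 : Fin (n + 1)), i.succ)}

/-- The wheel graph `W_{n,1}` on `n+1` vertices: a cycle on the `n` outer vertices
together with a hub `0` joined to each of them. -/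
def wheelGraph (n : ℕ) : SimpleGraph (Fin (n + 1)) :=
  SimpleGraph.fromEdgeSet
    ({e | ∃ i : Fin n, e = s((0 : Fin (n + 1)), i.succ)} ∪
     {e | ∃ i : Fin n, e = s(i.succ, (nextFin i).succ)})

/-- The cycle graph `C_n` on the outer vertices `1, …, n` of `Fin (n+1)`, together
with the isolated vertex `0`. -/
def cycleWithIsolated (n : ℕ) : SimpleGraph (Fin (n + 1)) :=
  SimpleGraph.fromEdgeSet {e | ∃ i : Fin n, e = s(i.succ, (nextFin i).succ)}

/-- `HullCycle f` says that for every `i`, all the other drawn points lie (strictly) on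
one side of the line through `f i` and `f (i+1)`; for an injective generic placement this
means the points are in convex position and occur around the convex hull exactly in the
cyclic order `f 0, f 1, …`. -/
def HullCycle {m : ℕ} (f : Fin m → Pt) : Prop :=
  ∀ i j l : Fin m, j ≠ i → j ≠ nextFin i → l ≠ i → l ≠ nextFin i →
    ¬ Separates (lineThrough (f i) (f (nextFin i))) (f j) (f l)

end

noncomputable section Aux

/-- signed area / cross product -/
def cr (p q r : Pt) : ℝ := (q.1 - p.1) * (r.2 - p.2) - (q.2 - p.2) * (r.1 - p.1)

lemma mem_lineThrough_iff {p q : Pt} (hpq : p ≠ q) (x : Pt) :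
    x ∈ lineThrough p q ↔ cr p q x = 0 := by
  have hx : x = (x - p) +ᵥ p := by simp [vadd_eq_add]
  constructor
  · intro hmem
    rw [hx] at hmem
    simp only [lineThrough, SetLike.mem_coe] at hmem
    rw [vadd_left_mem_affineSpan_pair] at hmem
    obtain ⟨r, hr⟩ := hmem
    have h1 : x.1 - p.1 = r * (q.1 - p.1) := by
      have := congrArg Prod.fst hr; simpa [vsub_eq_sub] using this.symm
    have h2 : x.2 - p.2 = r * (q.2 - p.2) := by
      have := congrArg Prod.snd hr; simpa [vsub_eq_sub] using this.symm
    unfold cr; rw [h1, h2]; ring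
  · intro hcr
    rw [hx]
    simp only [lineThrough, SetLike.mem_coe]
    rw [vadd_left_mem_affineSpan_pair]
    have hne : q.1 - p.1 ≠ 0 ∨ q.2 - p.2 ≠ 0 := by
      by_contra h
      push_neg at h
      exact hpq (Prod.ext (by linarith [h.1]) (by linarith [h.2]))
    unfold cr at hcr
    rcases hne with h | h
    · exact ⟨(x.1 - p.1) / (q.1 - p.1), Prod.ext (by simp only [vsub_eq_sub, Prod.smul_fst, Prod.fst_sub, smul_eq_mul]; exact div_mul_cancel₀ _ h)
        (by show _ * (q.2 - p.2) = x.2 - p.2; field_simp; nlinarith [hcr])⟩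
    · exact ⟨(x.2 - p.2) / (q.2 - p.2), Prod.ext
        (by show _ * (q.1 - p.1) = x.1 - p.1; field_simp; nlinarith [hcr])
        (by simp only [vsub_eq_sub, Prod.smul_snd, Prod.snd_sub, smul_eq_mul]; exact div_mul_cancel₀ _ h)⟩

lemma cr_eq_zero_of_collinear {p q r : Pt} (h : Collinear ℝ ({p, q, r} : Set Pt)) :
    cr p q r = 0 := by
  obtain ⟨v, hv⟩ := (collinear_iff_of_mem (Set.mem_insert p {q, r})).1 h
  obtain ⟨tq, hq⟩ := hv q (by simp)
  obtain ⟨tr, hr⟩ := hv r (by simp)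
  have hq1 : q.1 = tq * v.1 + p.1 := by rw [hq]; rfl
  have hq2 : q.2 = tq * v.2 + p.2 := by rw [hq]; rfl
  have hr1 : r.1 = tr * v.1 + p.1 := by rw [hr]; rfl
  have hr2 : r.2 = tr * v.2 + p.2 := by rw [hr]; rfl
  unfold cr; rw [hq1, hq2, hr1, hr2]; ring

lemma not_collinear_of_cr {p q r : Pt} (h : cr p q r ≠ 0) :
    ¬ Collinear ℝ ({p, q, r} : Set Pt) := fun hc => h (cr_eq_zero_of_collinear hc)

lemma collinear_of_cr_eq_zero {p q r : Pt} (hpq : p ≠ q) (h : cr p q r = 0) :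
    Collinear ℝ ({p, q, r} : Set Pt) := by
  have hmem : r ∈ lineThrough p q := (mem_lineThrough_iff hpq r).2 h
  have := collinear_insert_of_mem_affineSpan_pair (k := ℝ) (p₁ := r) (p₂ := p) (p₃ := q) hmem
  have hset : ({p, q, r} : Set Pt) = {r, p, q} := by ext x; simp; tauto
  rw [hset]; exact this

lemma cr_continuous (p q : Pt) : Continuous fun x : Pt => cr p q x := by
  unfold cr; fun_prop

lemma convex_cr_pos (p q : Pt) : Convex ℝ {x : Pt | 0 < cr p q x} := by
  intro x hx y hy a b ha hb hab
  simp only [Set.mem_setOf_eq] at *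
  have h1 : ((a • x + b • y : Pt)).1 = a * x.1 + b * y.1 := rfl
  have h2 : ((a • x + b • y : Pt)).2 = a * x.2 + b * y.2 := rfl
  have hxy : cr p q (a • x + b • y) = a * cr p q x + b * cr p q y := by
    unfold cr; rw [h1, h2]; have hb' : b = 1 - a := by linarith
    rw [hb']; ring
  rw [hxy]
  rcases eq_or_lt_of_le ha with h | h
  · have : b = 1 := by linarith
    rw [← h, this]; simpa using hy
  · nlinarith [mul_nonneg hb hy.le]

lemma convex_cr_neg (p q : Pt) : Convex ℝ {x : Pt | cr p q x < 0} := by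
  intro x hx y hy a b ha hb hab
  simp only [Set.mem_setOf_eq] at *
  have h1 : ((a • x + b • y : Pt)).1 = a * x.1 + b * y.1 := rfl
  have h2 : ((a • x + b • y : Pt)).2 = a * x.2 + b * y.2 := rfl
  have hxy : cr p q (a • x + b • y) = a * cr p q x + b * cr p q y := by
    unfold cr; rw [h1, h2]; have hb' : b = 1 - a := by linarith
    rw [hb']; ring
  rw [hxy]
  rcases eq_or_lt_of_le ha with h | h
  · have : b = 1 := by linarith
    rw [← h, this]; simpa using hy
  · nlinarith [mul_nonpos_of_nonneg_of_nonpos hb hy.le]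

lemma same_comp_of_same_sign_pos {p q : Pt} (hpq : p ≠ q) {P Q : Pt}
    (hP : 0 < cr p q P) (hQ : 0 < cr p q Q) :
    connectedComponentIn (lineThrough p q)ᶜ P = connectedComponentIn (lineThrough p q)ᶜ Q := by
  have hsub : {x : Pt | 0 < cr p q x} ⊆ (lineThrough p q)ᶜ := by
    intro x hx
    simp only [Set.mem_compl_iff, mem_lineThrough_iff hpq]
    exact ne_of_gt hx
  have := (convex_cr_pos p q).isPreconnected.subset_connectedComponentIn
    (x := P) hP hsub
  exact (connectedComponentIn_eq (this hQ)).symm ▸ rfl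

lemma same_comp_of_same_sign_neg {p q : Pt} (hpq : p ≠ q) {P Q : Pt}
    (hP : cr p q P < 0) (hQ : cr p q Q < 0) :
    connectedComponentIn (lineThrough p q)ᶜ P = connectedComponentIn (lineThrough p q)ᶜ Q := by
  have hsub : {x : Pt | cr p q x < 0} ⊆ (lineThrough p q)ᶜ := by
    intro x hx
    simp only [Set.mem_compl_iff, mem_lineThrough_iff hpq]
    exact ne_of_lt hx
  have := (convex_cr_neg p q).isPreconnected.subset_connectedComponentIn
    (x := P) hP hsub
  exact (connectedComponentIn_eq (this hQ)).symm ▸ rfl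

lemma ne_comp_of_opp_sign {p q : Pt} (hpq : p ≠ q) {P Q : Pt}
    (hP : cr p q P < 0) (hQ : 0 < cr p q Q) :
    connectedComponentIn (lineThrough p q)ᶜ P ≠ connectedComponentIn (lineThrough p q)ᶜ Q := by
  intro heq
  have hPc : P ∈ (lineThrough p q)ᶜ := by
    simp only [Set.mem_compl_iff, mem_lineThrough_iff hpq]; exact ne_of_lt hP
  have hQc : Q ∈ (lineThrough p q)ᶜ := by
    simp only [Set.mem_compl_iff, mem_lineThrough_iff hpq]; exact ne_of_gt hQ
  have hPm : P ∈ connectedComponentIn (lineThrough p q)ᶜ P := mem_connectedComponentIn hPc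
  have hQm : Q ∈ connectedComponentIn (lineThrough p q)ᶜ P := by
    rw [heq]; exact mem_connectedComponentIn hQc
  have hpre : IsPreconnected (connectedComponentIn (lineThrough p q)ᶜ P) :=
    isPreconnected_connectedComponentIn
  obtain ⟨z, hzC, hz⟩ := hpre.intermediate_value₂ hPm hQm
    ((cr_continuous p q).continuousOn) (continuousOn_const (c := (0:ℝ)))
    (le_of_lt hP) (le_of_lt hQ)
  have hzc : z ∈ (lineThrough p q)ᶜ := connectedComponentIn_subset _ _ hzC
  exact hzc ((mem_lineThrough_iff hpq z).2 hz)

lemma sep_iff {p q : Pt} (hpq : p ≠ q) (P Q : Pt) :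
    Separates (lineThrough p q) P Q ↔ cr p q P * cr p q Q < 0 := by
  constructor
  · rintro ⟨hP, hQ, hne⟩
    have hP' : cr p q P ≠ 0 := by
      intro h; exact hP ((mem_lineThrough_iff hpq P).2 h)
    have hQ' : cr p q Q ≠ 0 := by
      intro h; exact hQ ((mem_lineThrough_iff hpq Q).2 h)
    rcases hP'.lt_or_gt with h1 | h1 <;> rcases hQ'.lt_or_gt with h2 | h2
    · exact absurd (same_comp_of_same_sign_neg hpq h1 h2) hne
    · exact mul_neg_of_neg_of_pos h1 h2
    · exact mul_neg_of_pos_of_neg h1 h2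
    · exact absurd (same_comp_of_same_sign_pos hpq h1 h2) hne
  · intro h
    have hP' : cr p q P ≠ 0 := fun hz => by rw [hz] at h; simp at h
    have hQ' : cr p q Q ≠ 0 := fun hz => by rw [hz] at h; simp at h
    refine ⟨fun hm => hP' ((mem_lineThrough_iff hpq P).1 hm),
            fun hm => hQ' ((mem_lineThrough_iff hpq Q).1 hm), ?_⟩
    rcases hP'.lt_or_gt with h1 | h1 <;> rcases hQ'.lt_or_gt with h2 | h2
    · nlinarith
    · exact ne_comp_of_opp_sign hpq h1 h2
    · exact (ne_comp_of_opp_sign hpq h2 h1).symm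
    · nlinarith


lemma lineThrough_comm (p q : Pt) : lineThrough p q = lineThrough q p := by
  unfold lineThrough; rw [Set.pair_comm]

lemma sepCount_eq_ite (f : Fin 4 → Pt) (hf : Function.Injective f) (s t c d : Fin 4)
    (hcd : c ≠ d) (hcs : c ≠ s) (hct : c ≠ t) (hds : d ≠ s) (hdt : d ≠ t)
    (h : ∀ a b : Fin 4, a ≠ b → a ≠ s → a ≠ t → b ≠ s → b ≠ t →
      (a = c ∧ b = d) ∨ (a = d ∧ b = c)) :
    sepCount f s t = if cr (f c) (f d) (f s) * cr (f c) (f d) (f t) < 0 then 1 else 0 := by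
  have hfcd : f c ≠ f d := fun hh => hcd (hf hh)
  have hfdc : f d ≠ f c := hfcd.symm
  have hsep : Separates (lineThrough (f c) (f d)) (f s) (f t) ↔
      cr (f c) (f d) (f s) * cr (f c) (f d) (f t) < 0 := sep_iff hfcd _ _
  unfold sepCount
  split_ifs with hcond
  · rw [show {e : Finset (Fin 4) | ∃ a b : Fin 4, e = {a, b} ∧ a ≠ b ∧ s ∉ e ∧ t ∉ e ∧
        Separates (lineThrough (f a) (f b)) (f s) (f t)} = {({c, d} : Finset (Fin 4))} from ?_]
    · exact Set.ncard_singleton _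
    ext e
    simp only [Set.mem_setOf_eq, Set.mem_singleton_iff]
    constructor
    · rintro ⟨a, b, rfl, hab, hs, ht, -⟩
      simp only [Finset.mem_insert, Finset.mem_singleton, not_or] at hs ht
      rcases h a b hab (Ne.symm hs.1) (Ne.symm ht.1) (Ne.symm hs.2) (Ne.symm ht.2) with
        ⟨rfl, rfl⟩ | ⟨rfl, rfl⟩
      · rfl
      · exact Finset.pair_comm a b
    · rintro rfl
      refine ⟨c, d, rfl, hcd, ?_, ?_, hsep.2 hcond⟩
      · simp only [Finset.mem_insert, Finset.mem_singleton, not_or]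
        exact ⟨Ne.symm hcs, Ne.symm hds⟩
      · simp only [Finset.mem_insert, Finset.mem_singleton, not_or]
        exact ⟨Ne.symm hct, Ne.symm hdt⟩
  · rw [show {e : Finset (Fin 4) | ∃ a b : Fin 4, e = {a, b} ∧ a ≠ b ∧ s ∉ e ∧ t ∉ e ∧
        Separates (lineThrough (f a) (f b)) (f s) (f t)} = (∅ : Set (Finset (Fin 4))) from ?_]
    · exact Set.ncard_empty _
    ext e
    simp only [Set.mem_setOf_eq, Set.mem_empty_iff_false, iff_false, not_exists]
    rintro a b ⟨rfl, hab, hs, ht, hsepa⟩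
    simp only [Finset.mem_insert, Finset.mem_singleton, not_or] at hs ht
    rcases h a b hab (Ne.symm hs.1) (Ne.symm ht.1) (Ne.symm hs.2) (Ne.symm ht.2) with
      ⟨rfl, rfl⟩ | ⟨rfl, rfl⟩
    · exact hcond (hsep.1 hsepa)
    · rw [lineThrough_comm] at hsepa
      exact hcond (hsep.1 hsepa)

lemma edgeSet_top_fin4 : (⊤ : SimpleGraph (Fin 4)).edgeSet.toFinite.toFinset =
    ({s(0,1), s(0,2), s(0,3), s(1,2), s(1,3), s(2,3)} : Finset (Sym2 (Fin 4))) := by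
  ext e
  simp only [Set.Finite.mem_toFinset]
  revert e
  decide

lemma drawingCrossings_top (f : Fin 4 → Pt) (hf : Function.Injective f) :
    drawingCrossings (⊤ : SimpleGraph (Fin 4)) f =
      (if cr (f 2) (f 3) (f 0) * cr (f 2) (f 3) (f 1) < 0 then 1 else 0) +
      (if cr (f 1) (f 3) (f 0) * cr (f 1) (f 3) (f 2) < 0 then 1 else 0) +
      (if cr (f 1) (f 2) (f 0) * cr (f 1) (f 2) (f 3) < 0 then 1 else 0) +
      (if cr (f 0) (f 3) (f 1) * cr (f 0) (f 3) (f 2) < 0 then 1 else 0) +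
      (if cr (f 0) (f 2) (f 1) * cr (f 0) (f 2) (f 3) < 0 then 1 else 0) +
      (if cr (f 0) (f 1) (f 2) * cr (f 0) (f 1) (f 3) < 0 then 1 else 0) := by
  rw [drawingCrossings, edgeSet_top_fin4]
  rw [Finset.sum_insert (by decide), Finset.sum_insert (by decide),
    Finset.sum_insert (by decide), Finset.sum_insert (by decide),
    Finset.sum_insert (by decide), Finset.sum_singleton]
  simp only [Sym2.lift_mk]
  rw [sepCount_eq_ite f hf 0 1 2 3 (by decide) (by decide) (by decide) (by decide) (by decide)
      (by decide),
    sepCount_eq_ite f hf 0 2 1 3 (by decide) (by decide) (by decide) (by decide) (by decide)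
      (by decide),
    sepCount_eq_ite f hf 0 3 1 2 (by decide) (by decide) (by decide) (by decide) (by decide)
      (by decide),
    sepCount_eq_ite f hf 1 2 0 3 (by decide) (by decide) (by decide) (by decide) (by decide)
      (by decide),
    sepCount_eq_ite f hf 1 3 0 2 (by decide) (by decide) (by decide) (by decide) (by decide)
      (by decide),
    sepCount_eq_ite f hf 2 3 0 1 (by decide) (by decide) (by decide) (by decide) (by decide)
      (by decide)]
  ring

lemma count_bounds (a b c d : ℝ) (ha : a ≠ 0) (hb : b ≠ 0) (hc : c ≠ 0) (hd : d ≠ 0)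
    (hrel : a - b + c - d = 0) :
    2 ≤ ((if b * a < 0 then 1 else 0) + (if c * -a < 0 then 1 else 0) +
         (if d * a < 0 then 1 else 0) + (if -c * -b < 0 then 1 else 0) +
         (if -d * b < 0 then 1 else 0) + (if d * c < 0 then 1 else 0) : ℕ) ∧
    ((if b * a < 0 then 1 else 0) + (if c * -a < 0 then 1 else 0) +
         (if d * a < 0 then 1 else 0) + (if -c * -b < 0 then 1 else 0) +
         (if -d * b < 0 then 1 else 0) + (if d * c < 0 then 1 else 0) : ℕ) ≤ 3 := by
  rcases ha.lt_or_gt with ha' | ha' <;> rcases hb.lt_or_gt with hb' | hb' <;>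
    rcases hc.lt_or_gt with hc' | hc' <;> rcases hd.lt_or_gt with hd' | hd'
  · rw [if_neg (not_lt.2 (by nlinarith : (0:ℝ) ≤ b * a)),
      if_pos (by nlinarith : c * -a < 0),
      if_neg (not_lt.2 (by nlinarith : (0:ℝ) ≤ d * a)),
      if_neg (not_lt.2 (by nlinarith : (0:ℝ) ≤ -c * -b)),
      if_pos (by nlinarith : -d * b < 0),
      if_neg (not_lt.2 (by nlinarith : (0:ℝ) ≤ d * c))]
    norm_num
  · rw [if_neg (not_lt.2 (by nlinarith : (0:ℝ) ≤ b * a)),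
      if_pos (by nlinarith : c * -a < 0),
      if_pos (by nlinarith : d * a < 0),
      if_neg (not_lt.2 (by nlinarith : (0:ℝ) ≤ -c * -b)),
      if_neg (not_lt.2 (by nlinarith : (0:ℝ) ≤ -d * b)),
      if_pos (by nlinarith : d * c < 0)]
    norm_num
  · rw [if_neg (not_lt.2 (by nlinarith : (0:ℝ) ≤ b * a)),
      if_neg (not_lt.2 (by nlinarith : (0:ℝ) ≤ c * -a)),
      if_neg (not_lt.2 (by nlinarith : (0:ℝ) ≤ d * a)),
      if_pos (by nlinarith : -c * -b < 0),
      if_pos (by nlinarith : -d * b < 0),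
      if_pos (by nlinarith : d * c < 0)]
    norm_num
  · rw [if_neg (not_lt.2 (by nlinarith : (0:ℝ) ≤ b * a)),
      if_neg (not_lt.2 (by nlinarith : (0:ℝ) ≤ c * -a)),
      if_pos (by nlinarith : d * a < 0),
      if_pos (by nlinarith : -c * -b < 0),
      if_neg (not_lt.2 (by nlinarith : (0:ℝ) ≤ -d * b)),
      if_neg (not_lt.2 (by nlinarith : (0:ℝ) ≤ d * c))]
    norm_num
  · rw [if_pos (by nlinarith : b * a < 0),
      if_pos (by nlinarith : c * -a < 0),
      if_neg (not_lt.2 (by nlinarith : (0:ℝ) ≤ d * a)),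
      if_pos (by nlinarith : -c * -b < 0),
      if_neg (not_lt.2 (by nlinarith : (0:ℝ) ≤ -d * b)),
      if_neg (not_lt.2 (by nlinarith : (0:ℝ) ≤ d * c))]
    norm_num
  · exfalso; linarith
  · rw [if_pos (by nlinarith : b * a < 0),
      if_neg (not_lt.2 (by nlinarith : (0:ℝ) ≤ c * -a)),
      if_neg (not_lt.2 (by nlinarith : (0:ℝ) ≤ d * a)),
      if_neg (not_lt.2 (by nlinarith : (0:ℝ) ≤ -c * -b)),
      if_neg (not_lt.2 (by nlinarith : (0:ℝ) ≤ -d * b)),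
      if_pos (by nlinarith : d * c < 0)]
    norm_num
  · rw [if_pos (by nlinarith : b * a < 0),
      if_neg (not_lt.2 (by nlinarith : (0:ℝ) ≤ c * -a)),
      if_pos (by nlinarith : d * a < 0),
      if_neg (not_lt.2 (by nlinarith : (0:ℝ) ≤ -c * -b)),
      if_pos (by nlinarith : -d * b < 0),
      if_neg (not_lt.2 (by nlinarith : (0:ℝ) ≤ d * c))]
    norm_num
  · rw [if_pos (by nlinarith : b * a < 0),
      if_neg (not_lt.2 (by nlinarith : (0:ℝ) ≤ c * -a)),
      if_pos (by nlinarith : d * a < 0),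
      if_neg (not_lt.2 (by nlinarith : (0:ℝ) ≤ -c * -b)),
      if_pos (by nlinarith : -d * b < 0),
      if_neg (not_lt.2 (by nlinarith : (0:ℝ) ≤ d * c))]
    norm_num
  · rw [if_pos (by nlinarith : b * a < 0),
      if_neg (not_lt.2 (by nlinarith : (0:ℝ) ≤ c * -a)),
      if_neg (not_lt.2 (by nlinarith : (0:ℝ) ≤ d * a)),
      if_neg (not_lt.2 (by nlinarith : (0:ℝ) ≤ -c * -b)),
      if_neg (not_lt.2 (by nlinarith : (0:ℝ) ≤ -d * b)),
      if_pos (by nlinarith : d * c < 0)]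
    norm_num
  · exfalso; linarith
  · rw [if_pos (by nlinarith : b * a < 0),
      if_pos (by nlinarith : c * -a < 0),
      if_neg (not_lt.2 (by nlinarith : (0:ℝ) ≤ d * a)),
      if_pos (by nlinarith : -c * -b < 0),
      if_neg (not_lt.2 (by nlinarith : (0:ℝ) ≤ -d * b)),
      if_neg (not_lt.2 (by nlinarith : (0:ℝ) ≤ d * c))]
    norm_num
  · rw [if_neg (not_lt.2 (by nlinarith : (0:ℝ) ≤ b * a)),
      if_neg (not_lt.2 (by nlinarith : (0:ℝ) ≤ c * -a)),
      if_pos (by nlinarith : d * a < 0),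
      if_pos (by nlinarith : -c * -b < 0),
      if_neg (not_lt.2 (by nlinarith : (0:ℝ) ≤ -d * b)),
      if_neg (not_lt.2 (by nlinarith : (0:ℝ) ≤ d * c))]
    norm_num
  · rw [if_neg (not_lt.2 (by nlinarith : (0:ℝ) ≤ b * a)),
      if_neg (not_lt.2 (by nlinarith : (0:ℝ) ≤ c * -a)),
      if_neg (not_lt.2 (by nlinarith : (0:ℝ) ≤ d * a)),
      if_pos (by nlinarith : -c * -b < 0),
      if_pos (by nlinarith : -d * b < 0),
      if_pos (by nlinarith : d * c < 0)]
    norm_num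
  · rw [if_neg (not_lt.2 (by nlinarith : (0:ℝ) ≤ b * a)),
      if_pos (by nlinarith : c * -a < 0),
      if_pos (by nlinarith : d * a < 0),
      if_neg (not_lt.2 (by nlinarith : (0:ℝ) ≤ -c * -b)),
      if_neg (not_lt.2 (by nlinarith : (0:ℝ) ≤ -d * b)),
      if_pos (by nlinarith : d * c < 0)]
    norm_num
  · rw [if_neg (not_lt.2 (by nlinarith : (0:ℝ) ≤ b * a)),
      if_pos (by nlinarith : c * -a < 0),
      if_neg (not_lt.2 (by nlinarith : (0:ℝ) ≤ d * a)),
      if_neg (not_lt.2 (by nlinarith : (0:ℝ) ≤ -c * -b)),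
      if_pos (by nlinarith : -d * b < 0),
      if_neg (not_lt.2 (by nlinarith : (0:ℝ) ≤ d * c))]
    norm_num

lemma crossings_bounds (f : Fin 4 → Pt) (hf : IsRectDrawing f) :
    2 ≤ drawingCrossings (⊤ : SimpleGraph (Fin 4)) f ∧
      drawingCrossings (⊤ : SimpleGraph (Fin 4)) f ≤ 3 := by
  obtain ⟨hinj, -, hgen⟩ := hf
  have hne : ∀ i j k : Fin 4, i ≠ j → i ≠ k → j ≠ k → cr (f i) (f j) (f k) ≠ 0 := by
    intro i j k hij hik hjk h0
    exact hgen (f i) ⟨i, rfl⟩ (f j) ⟨j, rfl⟩ (f k) ⟨k, rfl⟩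
      (fun h => hij (hinj h)) (fun h => hik (hinj h)) (fun h => hjk (hinj h))
      (collinear_of_cr_eq_zero (fun h => hij (hinj h)) h0)
  rw [drawingCrossings_top f hinj]
  rw [show cr (f 2) (f 3) (f 0) = cr (f 0) (f 2) (f 3) from by unfold cr; ring,
      show cr (f 2) (f 3) (f 1) = cr (f 1) (f 2) (f 3) from by unfold cr; ring,
      show cr (f 1) (f 3) (f 0) = cr (f 0) (f 1) (f 3) from by unfold cr; ring,
      show cr (f 1) (f 3) (f 2) = -cr (f 1) (f 2) (f 3) from by unfold cr; ring,
      show cr (f 1) (f 2) (f 0) = cr (f 0) (f 1) (f 2) from by unfold cr; ring,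
      show cr (f 0) (f 3) (f 1) = -cr (f 0) (f 1) (f 3) from by unfold cr; ring,
      show cr (f 0) (f 3) (f 2) = -cr (f 0) (f 2) (f 3) from by unfold cr; ring,
      show cr (f 0) (f 2) (f 1) = -cr (f 0) (f 1) (f 2) from by unfold cr; ring]
  exact count_bounds _ _ _ _ (hne 1 2 3 (by decide) (by decide) (by decide))
    (hne 0 2 3 (by decide) (by decide) (by decide))
    (hne 0 1 3 (by decide) (by decide) (by decide))
    (hne 0 1 2 (by decide) (by decide) (by decide))
    (by unfold cr; ring)

def fconv : Fin 4 → Pt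
  | 0 => ((0:ℝ), (0:ℝ)) | 1 => (1, 0) | 2 => (1, 1) | 3 => (0, 1)

def ftri : Fin 4 → Pt
  | 0 => ((0:ℝ), (0:ℝ)) | 1 => (4, 0) | 2 => (0, 4) | 3 => (1, 1)

lemma fconv_inj : Function.Injective fconv := by
  intro i j h
  fin_cases i <;> fin_cases j <;>
    simp only [fconv, Prod.mk.injEq] at h ⊢ <;> norm_num at h
  all_goals rfl

lemma ftri_inj : Function.Injective ftri := by
  intro i j h
  fin_cases i <;> fin_cases j <;>
    simp only [ftri, Prod.mk.injEq] at h ⊢ <;> norm_num at h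
  all_goals rfl

lemma fconv_drawing : IsRectDrawing fconv := by
  refine ⟨fconv_inj, Set.finite_range fconv, ?_⟩
  rintro p ⟨i, rfl⟩ q ⟨j, rfl⟩ r ⟨k, rfl⟩ hpq hpr hqr
  apply not_collinear_of_cr
  fin_cases i <;> fin_cases j <;> fin_cases k <;>
    simp_all [fconv, cr] <;> norm_num

lemma ftri0 : ftri 0 = ((0:ℝ),(0:ℝ)) := rfl
lemma ftri1 : ftri 1 = ((4:ℝ),(0:ℝ)) := rfl
lemma ftri2 : ftri 2 = ((0:ℝ),(4:ℝ)) := rfl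
lemma ftri3 : ftri 3 = ((1:ℝ),(1:ℝ)) := rfl

lemma ftri_drawing : IsRectDrawing ftri := by
  refine ⟨ftri_inj, Set.finite_range ftri, ?_⟩
  rintro p ⟨i, rfl⟩ q ⟨j, rfl⟩ r ⟨k, rfl⟩ hpq hpr hqr
  apply not_collinear_of_cr
  fin_cases i <;> fin_cases j <;> fin_cases k <;>
    simp_all [ftri, cr] <;> norm_num

lemma fconv_val : drawingCrossings (⊤ : SimpleGraph (Fin 4)) fconv = 2 := by
  rw [drawingCrossings_top fconv fconv_inj]
  norm_num [fconv, cr]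

lemma ftri_val : drawingCrossings (⊤ : SimpleGraph (Fin 4)) ftri = 3 := by
  rw [drawingCrossings_top ftri ftri_inj]
  norm_num [ftri, cr]

end Aux

/-- `OCN(K_4) = 2` and `MOCN(K_4) = 3`. -/
theorem stmt_14 :
    OCN (⊤ : SimpleGraph (Fin 4)) = 2 ∧ MOCN (⊤ : SimpleGraph (Fin 4)) = 3 := by
  have hmem2 : (2:ℕ) ∈ {n | ∃ f : Fin 4 → Pt, IsRectDrawing f ∧
      drawingCrossings (⊤ : SimpleGraph (Fin 4)) f = n} := ⟨fconv, fconv_drawing, fconv_val⟩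
  have hmem3 : (3:ℕ) ∈ {n | ∃ f : Fin 4 → Pt, IsRectDrawing f ∧
      drawingCrossings (⊤ : SimpleGraph (Fin 4)) f = n} := ⟨ftri, ftri_drawing, ftri_val⟩
  constructor
  · unfold OCN
    apply le_antisymm
    · exact csInf_le (OrderBot.bddBelow _) hmem2
    · apply le_csInf (Set.nonempty_of_mem hmem2)
      rintro n ⟨f, hf, rfl⟩
      exact (crossings_bounds f hf).1
  · unfold MOCN
    apply le_antisymm
    · apply csSup_le (Set.nonempty_of_mem hmem3)
      rintro n ⟨f, hf, rfl⟩
      exact (crossings_bounds f hf).2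
    · refine le_csSup ⟨3, ?_⟩ hmem3
      rintro n ⟨f, hf, rfl⟩
      exact (crossings_bounds f hf).2
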